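/- arXiv:1608.04544 — 2 statements merged into one kernel-verified Lean document; each statement's English description precedes it below -/
import Mathlib

section
/- Suppose Y is linearly ordered with greatest element max Y. Let F ⊆ Y^X be a nonempty class that is closed under permutation (c.u.p.) and such that every f ∈ F takes the value max Y at exactly m points, where 1 ≤ m ≤ n. Then for every optimiser a, the expected optimisation time under the uniform distribution on F equals (n+1)/(m+1): Σ_{f ∈ F} (1/|F|) · M_ptm(T^y(a,f)) = (n+1)/(m+1). -/
namespace NFL

/-- A (deterministic) optimiser on search space `Fin n` and range `Y`:
it assigns to every trace (list of pairs with pairwise distinct first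
components) of length `< n` a next, unvisited search point. -/
structure Optimiser (n : ℕ) (Y : Type*) where
  next : List (Fin n × Y) → Fin n
  valid : ∀ T : List (Fin n × Y), T.length < n → (T.map Prod.fst).Nodup →
    next T ∉ T.map Prod.fst

variable {n : ℕ} {Y : Type*}

/-- The trace generated after `k` steps by running optimiser `a`
on target function `f`, starting from the empty trace. -/
def runFrom (a : Optimiser n Y) (f : Fin n → Y) : ℕ → List (Fin n × Y)
  | 0 => []
  | k + 1 =>
      runFrom a f k ++ [(a.next (runFrom a f k), f (a.next (runFrom a f k)))]

/-- The result vector `T^y(a,f)`: its `i`-th entry (0-indexed) is the value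
observed at step `i+1`, i.e. `f` applied to the point probed after `i` steps. -/
def resVec (a : Optimiser n Y) (f : Fin n → Y) (i : Fin n) : Y :=
  f (a.next (runFrom a f (i : ℕ)))

/-- A problem distribution: a probability distribution on `Y^X`. -/
def IsProbDist [Fintype Y] (P : (Fin n → Y) → ℝ) : Prop :=
  (∀ f, 0 ≤ P f) ∧ ∑ f, P f = 1

/-- `P_a(R)`: the probability that optimiser `a` produces result vector `R`. -/
def resProb [Fintype Y] [DecidableEq Y] (P : (Fin n → Y) → ℝ)
    (a : Optimiser n Y) (R : Fin n → Y) : ℝ :=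
  ∑ f ∈ Finset.univ.filter (fun f => resVec a f = R), P f

/-- Expected performance `M^P(a)` of optimiser `a` under distribution `P`
and performance measure `M`. -/
def perf [Fintype Y] (P : (Fin n → Y) → ℝ) (M : (Fin n → Y) → ℝ)
    (a : Optimiser n Y) : ℝ :=
  ∑ f, P f * M (resVec a f)

/-- NFL holds for `P`: all optimisers have the same expected performance
under every (nonnegative) performance measure. -/
def NFLholds [Fintype Y] (P : (Fin n → Y) → ℝ) : Prop :=
  ∀ M : (Fin n → Y) → ℝ, (∀ R, 0 ≤ M R) →
    ∀ a b : Optimiser n Y, perf P M a = perf P M b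

/-- The histogram of `f`: `h_f(y) = |f⁻¹(y)|`. -/
def histogram [DecidableEq Y] (f : Fin n → Y) (y : Y) : ℕ :=
  (Finset.univ.filter fun x => f x = y).card

/-- `P` is block uniform: functions with equal histograms get equal probability. -/
def BlockUniform [DecidableEq Y] (P : (Fin n → Y) → ℝ) : Prop :=
  ∀ f g : Fin n → Y, histogram f = histogram g → P f = P g

/-- `F` is closed under permutation: `f ∈ F` implies `σf ∈ F`,
where `(σf)(x) = f(σ⁻¹(x))`. -/
def Cup [Fintype Y] [DecidableEq Y] (F : Finset (Fin n → Y)) : Prop :=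
  ∀ f ∈ F, ∀ σ : Equiv.Perm (Fin n), (f ∘ σ.symm) ∈ F

/-- The uniform distribution on a class `F`. -/
noncomputable def uniformOn [Fintype Y] [DecidableEq Y] (F : Finset (Fin n → Y))
    (f : Fin n → Y) : ℝ :=
  if f ∈ F then 1 / F.card else 0

/-- An optimiser is non-adaptive if it probes the points of `X` in a fixed
order, regardless of the observed values. -/
def NonAdaptive (a : Optimiser n Y) : Prop :=
  ∃ ord : Fin n → Fin n,
    ∀ (f : Fin n → Y) (i : Fin n), a.next (runFrom a f (i : ℕ)) = ord i

/-- Optimisation time `M_ptm(R)`: the least index `i` (counting from 1) with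
`R[i] = yMax`, with the convention `M_ptm(R) = n` if no such index exists. -/
def mptm [DecidableEq Y] (yMax : Y) (R : Fin n → Y) : ℕ :=
  if h : ∃ i, R i = yMax then
    ((Finset.univ.filter fun i => R i = yMax).min'
      ⟨h.choose, Finset.mem_filter.mpr ⟨Finset.mem_univ _, h.choose_spec⟩⟩).val + 1
  else n

/-!
Running an optimiser on `f` yields `f ∘ π`, where the permutation `π` is its probing order, and
`f` can be recovered from this result vector; so on a c.u.p. class `f ↦ T^y(a, f)` is a bijection
of `F`, and the expected optimisation time is the same for every optimiser. Permuting arguments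
also shows that every `m`-set is the set of maxima of equally many `f ∈ F`, so the expectation is
the average of `min A + 1` over the `m`-subsets `A` of `{0, …, n-1}`. Counting, for each `t`, the
sets lying above `t` and applying the hockey-stick identity, this average is
`C(n+1, m+1) / C(n, m) = (n+1) / (m+1)`.
-/

open Finset

section Trace

variable {n : ℕ} {Y : Type*} (a : Optimiser n Y) (f : Fin n → Y)

theorem length_runFrom (k : ℕ) : (runFrom a f k).length = k := by
  induction k with
  | zero => rfl
  | succ k ih => simp [runFrom, ih]

theorem runFrom_map_fst (k : ℕ) :
    (runFrom a f k).map Prod.fst = (List.range k).map fun j => a.next (runFrom a f j) := by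
  induction k with
  | zero => rfl
  | succ k ih => simp [runFrom, List.range_succ, ih]

theorem nodup_map_fst_runFrom {k : ℕ} (hk : k ≤ n) : ((runFrom a f k).map Prod.fst).Nodup := by
  induction k with
  | zero => simp [runFrom]
  | succ k ih =>
    have hfresh := a.valid _ (by rw [length_runFrom]; omega) (ih (by omega))
    simp only [runFrom, List.map_append, List.map_cons, List.map_nil, List.nodup_append,
      ih (by omega), List.nodup_singleton, List.mem_singleton, true_and]
    rintro _ hmem _ rfl rfl
    exact hfresh hmem

theorem injective_next_runFrom :
    Function.Injective fun i : Fin n => a.next (runFrom a f i) := by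
  have hinj := List.inj_on_of_nodup_map
    (runFrom_map_fst a f n ▸ nodup_map_fst_runFrom a f le_rfl)
  intro i j hij
  exact Fin.ext (hinj (List.mem_range.2 i.isLt) (List.mem_range.2 j.isLt) hij)

noncomputable def probeOrder : Equiv.Perm (Fin n) :=
  Equiv.ofBijective _ (Finite.injective_iff_bijective.1 (injective_next_runFrom a f))

theorem resVec_eq_comp_probeOrder : resVec a f = f ∘ probeOrder a f := rfl

variable {a} in
theorem runFrom_eq_of_resVec_eq {g : Fin n → Y} (h : resVec a f = resVec a g) :
    ∀ k ≤ n, runFrom a f k = runFrom a g k := by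
  intro k
  induction k with
  | zero => intro _; rfl
  | succ k ih =>
    intro hk
    have hrun := ih (by omega)
    have hval : f (a.next (runFrom a g k)) = g (a.next (runFrom a g k)) := by
      simpa [resVec, hrun] using congrFun h ⟨k, hk⟩
    simp [runFrom, hrun, hval]

theorem resVec_injective : Function.Injective (resVec a) := by
  intro f g h
  have hord : probeOrder a f = probeOrder a g := by
    ext i
    simp [probeOrder, runFrom_eq_of_resVec_eq f h i i.isLt.le]
  rw [resVec_eq_comp_probeOrder, resVec_eq_comp_probeOrder, hord] at h
  exact (probeOrder a g).surjective.injective_comp_right h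

end Trace

section LevelSet

variable {n : ℕ} {Y : Type*} [DecidableEq Y]

def levelSet (f : Fin n → Y) (y : Y) : Finset (Fin n) := {x | f x = y}

theorem levelSet_comp_symm (f : Fin n → Y) (σ : Equiv.Perm (Fin n)) (y : Y) :
    levelSet (f ∘ σ.symm) y = (levelSet f y).map σ.toEmbedding := by
  ext x
  simp [levelSet]

end LevelSet

section FirstHit

theorem sum_choose_sub_one_sub (n m : ℕ) :
    ∑ t : Fin n, (n - 1 - t).choose m = n.choose (m + 1) := by
  induction n with
  | zero => simp
  | succ n ih =>
    rw [Fin.sum_univ_succ, Nat.choose_succ_succ', ← ih]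
    simp [Nat.sub_sub, Nat.add_comm]

theorem sum_powersetCard_card_filter_subset_Ioi_add_one (n m : ℕ) :
    ∑ A ∈ powersetCard m (univ : Finset (Fin n)), (#{t | A ⊆ Ioi t} + 1)
      = (n + 1).choose (m + 1) := by
  have hcount : ∑ A ∈ powersetCard m (univ : Finset (Fin n)), #{t | A ⊆ Ioi t}
      = ∑ t : Fin n, #(powersetCard m (Ioi t)) := by
    simp only [card_filter]
    rw [sum_comm]
    refine sum_congr rfl fun t _ => ?_
    rw [← card_filter]
    congr 1
    ext A
    simp [mem_powersetCard, and_comm]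
  rw [sum_add_distrib, hcount, sum_const, card_powersetCard, card_univ, Fintype.card_fin,
    smul_eq_mul, mul_one]
  simp only [card_powersetCard, Fin.card_Ioi]
  rw [sum_choose_sub_one_sub, Nat.choose_succ_succ' n m, Nat.add_comm]

theorem mptm_eq_card_filter_levelSet_subset_Ioi_add_one {n : ℕ} {Y : Type*} [DecidableEq Y]
    (yMax : Y) {R : Fin n → Y} (h : ∃ i, R i = yMax) :
    mptm yMax R = #{t | levelSet R yMax ⊆ Ioi t} + 1 := by
  rw [mptm, dif_pos h]
  congr 1
  rw [← Fin.card_Iio]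
  congr 1
  ext t
  rw [mem_Iio]
  refine (lt_min'_iff _ _).trans ?_
  simp [subset_iff, levelSet]

end FirstHit

section Cup

variable {n : ℕ} {Y : Type*} [Fintype Y] [DecidableEq Y] {F : Finset (Fin n → Y)}

theorem Cup.resVec_mem (hcup : Cup F) (a : Optimiser n Y) {f : Fin n → Y} (hf : f ∈ F) :
    resVec a f ∈ F := by
  simpa [resVec_eq_comp_probeOrder] using hcup f hf (probeOrder a f).symm

theorem Cup.image_resVec (hcup : Cup F) (a : Optimiser n Y) : F.image (resVec a) = F :=
  eq_of_subset_of_card_le (image_subset_iff.2 fun _ hf => hcup.resVec_mem a hf)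
    (card_image_of_injective F (resVec_injective a)).ge

theorem Cup.sum_comp_resVec {β : Type*} [AddCommMonoid β] (hcup : Cup F) (a : Optimiser n Y)
    (M : (Fin n → Y) → β) : ∑ f ∈ F, M (resVec a f) = ∑ f ∈ F, M f := by
  conv_rhs => rw [← hcup.image_resVec a, sum_image fun _ _ _ _ h => resVec_injective a h]

theorem Cup.card_filter_levelSet_eq (hcup : Cup F) (y : Y) {A B : Finset (Fin n)}
    (hAB : #A = #B) : #{f ∈ F | levelSet f y = A} = #{f ∈ F | levelSet f y = B} := by
  obtain ⟨σ, rfl⟩ := Equiv.Perm.exists_map_finset_eq A B hAB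
  refine card_nbij' (· ∘ σ.symm) (· ∘ σ) (fun f hf => ?_) (fun g hg => ?_) (fun f _ => ?_)
    (fun g _ => ?_)
  · simp only [coe_filter, Set.mem_ofPred_eq] at hf ⊢
    exact ⟨hcup f hf.1 σ, by rw [levelSet_comp_symm, hf.2]⟩
  · simp only [coe_filter, Set.mem_ofPred_eq] at hg ⊢
    have h := levelSet_comp_symm g σ.symm y
    simp only [Equiv.symm_symm] at h
    refine ⟨by simpa using hcup g hg.1 σ.symm, by rw [h, hg.2]; ext; simp⟩
  · ext; simp
  · ext; simp

theorem Cup.sum_comp_levelSet {β : Type*} [AddCommMonoid β] (hcup : Cup F) {y : Y} {m : ℕ}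
    (hm : ∀ f ∈ F, #(levelSet f y) = m) {A : Finset (Fin n)} (hA : #A = m)
    (g : Finset (Fin n) → β) :
    ∑ f ∈ F, g (levelSet f y)
      = #{f ∈ F | levelSet f y = A} • ∑ B ∈ powersetCard m univ, g B := by
  rw [← sum_fiberwise_of_maps_to (g := (levelSet · y)) (t := powersetCard m univ)
    fun f hf => mem_powersetCard.2 ⟨subset_univ _, hm f hf⟩, smul_sum]
  refine sum_congr rfl fun B hB => ?_
  rw [sum_congr rfl fun f hf => by rw [(mem_filter.1 hf).2], sum_const,
    hcup.card_filter_levelSet_eq y (B := A) (by rw [(mem_powersetCard.1 hB).2, hA])]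

end Cup

theorem cup_expected_optimisation_time_general {n : ℕ} {Y : Type*}
    [Fintype Y] [LinearOrder Y]
    (yMax : Y)
    (F : Finset (Fin n → Y)) (hF : F.Nonempty) (hcup : Cup F)
    (m : ℕ) (hm1 : 1 ≤ m)
    (hmax : ∀ f ∈ F, (Finset.univ.filter fun x => f x = yMax).card = m)
    (a : Optimiser n Y) :
    ∑ f ∈ F, (1 / (F.card : ℝ)) * (mptm yMax (resVec a f) : ℝ)
      = ((n : ℝ) + 1) / ((m : ℝ) + 1) := by
  obtain ⟨f₀, hf₀⟩ := hF
  have hlevel : ∀ f ∈ F, #(levelSet f yMax) = m := hmax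
  set c := #{f ∈ F | levelSet f yMax = levelSet f₀ yMax}
  have hcard : #F = c * n.choose m := by
    simpa only [sum_const, card_powersetCard, card_univ, Fintype.card_fin, smul_eq_mul,
      mul_one] using hcup.sum_comp_levelSet hlevel (hlevel f₀ hf₀) fun _ => (1 : ℕ)
  have htime : ∑ f ∈ F, mptm yMax f = c * (n + 1).choose (m + 1) := by
    have hhit : ∀ f ∈ F, ∃ i, f i = yMax := fun f hf => by
      obtain ⟨i, hi⟩ := card_pos.1 (hm1.trans_eq (hlevel f hf).symm)
      exact ⟨i, (mem_filter.1 hi).2⟩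
    rw [sum_congr rfl fun f hf =>
        mptm_eq_card_filter_levelSet_subset_Ioi_add_one yMax (hhit f hf),
      hcup.sum_comp_levelSet hlevel (hlevel f₀ hf₀) fun A => #{t | A ⊆ Ioi t} + 1,
      sum_powersetCard_card_filter_subset_Ioi_add_one, smul_eq_mul]
  have hchoose : ((n : ℝ) + 1) * n.choose m = (n + 1).choose (m + 1) * ((m : ℝ) + 1) := by
    exact_mod_cast Nat.add_one_mul_choose_eq n m
  have hcardR : (#F : ℝ) = c * n.choose m := by exact_mod_cast hcard
  have hF0 : (#F : ℝ) ≠ 0 := by exact_mod_cast (card_pos.2 ⟨f₀, hf₀⟩).ne'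
  rw [← mul_sum, hcup.sum_comp_resVec a fun R => (mptm yMax R : ℝ), ← Nat.cast_sum, htime]
  field_simp
  push_cast
  linear_combination -(c : ℝ) * hchoose - ((n : ℝ) + 1) * hcardR

theorem cup_expected_optimisation_time {n : ℕ} {Y : Type*}
    [Fintype Y] [LinearOrder Y]
    (hn : 1 ≤ n) (hY : 2 ≤ Fintype.card Y)
    (yMax : Y) (hyMax : ∀ y : Y, y ≤ yMax)
    (F : Finset (Fin n → Y)) (hF : F.Nonempty) (hcup : Cup F)
    (m : ℕ) (hm1 : 1 ≤ m) (hmn : m ≤ n)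
    (hmax : ∀ f ∈ F, (Finset.univ.filter fun x => f x = yMax).card = m)
    (a : Optimiser n Y) :
    ∑ f ∈ F, (1 / (F.card : ℝ)) * (mptm yMax (resVec a f) : ℝ)
      = ((n : ℝ) + 1) / ((m : ℝ) + 1) :=
  cup_expected_optimisation_time_general yMax F hF hcup m hm1 hmax a

end NFL
end

section
/- Let P be a probability distribution on {0,1}^X and let c > 0 satisfy P(f) ≥ c/n for every needle-in-a-haystack function f. Then for every optimiser a the expected optimisation time satisfies Σ_{f ∈ {0,1}^X} P(f) · M_ptm(T^y(a,f)) ≥ c·(n+1)/2. -/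
namespace NFL

variable {n : ℕ} {Y : Type*}

lemma runFrom_length (a : Optimiser n Y) (f : Fin n → Y) (k : ℕ) :
    (runFrom a f k).length = k := by
  induction k with
  | zero => rfl
  | succ k ih => simp [runFrom, ih]

lemma runFrom_nodup (a : Optimiser n Y) (f : Fin n → Y) (k : ℕ) (hk : k ≤ n) :
    ((runFrom a f k).map Prod.fst).Nodup := by
  induction k with
  | zero => simp [runFrom]
  | succ k ih =>
    have hk' : k ≤ n := le_of_lt (Nat.lt_of_succ_le hk)
    have hlt : (runFrom a f k).length < n := by
      rw [runFrom_length]; exact hk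
    have hnm := a.valid _ hlt (ih hk')
    simp only [runFrom, List.map_append, List.map_cons, List.map_nil]
    rw [List.nodup_append]
    exact ⟨ih hk', List.nodup_singleton _, by
      intro x hx y hy hxy; rw [List.mem_singleton] at hy; subst hy; subst hxy; exact hnm hx⟩

lemma next_mem (a : Optimiser n Y) (f : Fin n → Y) {j k : ℕ} (hjk : j < k) :
    a.next (runFrom a f j) ∈ (runFrom a f k).map Prod.fst := by
  induction k with
  | zero => omega
  | succ k ih =>
    simp only [runFrom, List.map_append, List.map_cons, List.map_nil,
      List.mem_append, List.mem_cons]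
    rcases Nat.lt_succ_iff_lt_or_eq.mp hjk with h | h
    · exact Or.inl (ih h)
    · subst h; simp

lemma runFrom_congr (a : Optimiser n Y) (f g : Fin n → Y) (k : ℕ)
    (h : ∀ j < k, f (a.next (runFrom a g j)) = g (a.next (runFrom a g j))) :
    runFrom a f k = runFrom a g k := by
  induction k with
  | zero => rfl
  | succ k ih =>
    have hk := ih (fun j hj => h j (Nat.lt_succ_of_lt hj))
    simp [runFrom, hk, h k (Nat.lt_succ_self k)]

lemma gauss_sum_succ (n : ℕ) : (∑ i ∈ Finset.range n, (i + 1)) * 2 = n * (n + 1) := by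
  induction n with
  | zero => rfl
  | succ m ih => rw [Finset.sum_range_succ, Nat.add_mul, ih]; ring

theorem niah_dominated_lower_bound {n : ℕ} (hn : 1 ≤ n)
    (P : (Fin n → Bool) → ℝ) (hP : IsProbDist P) (c : ℝ) (hc : 0 < c)
    (hdom : ∀ f : Fin n → Bool,
      (Finset.univ.filter fun x => f x = true).card = 1 → c / n ≤ P f)
    (a : Optimiser n Bool) :
    c * ((n : ℝ) + 1) / 2 ≤ ∑ f, P f * (mptm true (resVec a f) : ℝ) := by
  classical
  set f0 : Fin n → Bool := fun _ => false with hf0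
  set ord : Fin n → Fin n := fun i => a.next (runFrom a f0 (i : ℕ)) with hord
  -- ord is injective
  have hordinj : Function.Injective ord := by
    have key : ∀ i j : Fin n, (i : ℕ) < (j : ℕ) → ord i ≠ ord j := by
      intro i j hlt hij
      have hnm : ord j ∉ (runFrom a f0 (j : ℕ)).map Prod.fst := by
        apply a.valid
        · rw [runFrom_length]; exact j.isLt
        · exact runFrom_nodup a f0 _ (le_of_lt j.isLt)
      have hm : ord i ∈ (runFrom a f0 (j : ℕ)).map Prod.fst := next_mem a f0 hlt
      rw [hij] at hm
      exact hnm hm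
    intro i j hij
    by_contra hne
    rcases Nat.lt_or_ge (i : ℕ) (j : ℕ) with h | h
    · exact key i j h hij
    · rcases Nat.lt_or_ge (j : ℕ) (i : ℕ) with h2 | h2
      · exact key j i h2 hij.symm
      · exact hne (Fin.ext (le_antisymm h2 h))
  -- the NIAH function with needle at ord i
  set e : Fin n → (Fin n → Bool) := fun i x => decide (x = ord i) with he
  have heval : ∀ i x, e i x = true ↔ x = ord i := by
    intro i x; simp [he]
  -- e i agrees with f0 along the run up to step i
  have hrun : ∀ (i : Fin n) (k : ℕ), k ≤ (i : ℕ) →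
      runFrom a (e i) k = runFrom a f0 k := by
    intro i k hk
    apply runFrom_congr
    intro j hj
    have : a.next (runFrom a f0 j) = ord ⟨j, lt_trans (lt_of_lt_of_le hj hk) i.isLt⟩ := rfl
    rw [this]
    simp only [hf0]
    rw [Bool.eq_false_iff]
    intro hcon
    have := (heval i _).mp hcon
    have := hordinj this
    apply_fun (fun z : Fin n => (z : ℕ)) at this
    simp at this
    omega
  -- resVec of e i
  have hres : ∀ (i j : Fin n), (j : ℕ) ≤ (i : ℕ) →
      resVec a (e i) j = decide (j = i) := by
    intro i j hj
    unfold resVec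
    rw [hrun i (j : ℕ) hj]
    have : a.next (runFrom a f0 (j : ℕ)) = ord j := rfl
    rw [this]
    simp only [he]
    by_cases h : j = i
    · simp [h]
    · have : ord j ≠ ord i := fun hc => h (hordinj hc)
      simp [this, h]
  -- mptm of resVec a (e i) equals i + 1
  have hmptm : ∀ i : Fin n, mptm true (resVec a (e i)) = (i : ℕ) + 1 := by
    intro i
    have hi : resVec a (e i) i = true := by
      rw [hres i i le_rfl]; simp
    have hex : ∃ j, resVec a (e i) j = true := ⟨i, hi⟩
    rw [mptm, dif_pos hex]
    congr 1
    have himem : i ∈ Finset.univ.filter (fun j => resVec a (e i) j = true) := by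
      simp [hi]
    set S := Finset.univ.filter (fun j => resVec a (e i) j = true)
    have hne : S.Nonempty := ⟨i, himem⟩
    have h1 : S.min' hne ≤ i := Finset.min'_le S i himem
    have h2 : i ≤ S.min' hne := by
      by_contra hcon
      push_neg at hcon
      have hmem := Finset.min'_mem S hne
      simp only [S, Finset.mem_filter] at hmem
      have hle : ((S.min' hne : Fin n) : ℕ) ≤ (i : ℕ) := le_of_lt hcon
      rw [hres i _ hle] at hmem
      have := hmem.2
      simp only [decide_eq_true_eq] at this
      exact absurd this (fun h => absurd h.symm.le (not_le.mpr hcon))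
    have : S.min' hne = i := le_antisymm h1 h2
    rw [this]
  -- e is injective and e i is NIAH
  have heinj : Function.Injective e := by
    intro i j hij
    apply hordinj
    have : e i (ord j) = e j (ord j) := by rw [hij]
    rw [(heval j (ord j)).mpr rfl] at this
    exact ((heval i (ord j)).mp this).symm
  have hniah : ∀ i : Fin n,
      (Finset.univ.filter fun x => e i x = true).card = 1 := by
    intro i
    have : (Finset.univ.filter fun x => e i x = true) = {ord i} := by
      ext x
      simp [heval i x]
    rw [this, Finset.card_singleton]
  -- nonnegativity
  have hPnn := hP.1
  -- chain of inequalities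
  have step1 : ∑ f ∈ Finset.univ.image e, P f * (mptm true (resVec a f) : ℝ)
      ≤ ∑ f, P f * (mptm true (resVec a f) : ℝ) := by
    apply Finset.sum_le_sum_of_subset_of_nonneg (Finset.subset_univ _)
    intro f _ _
    exact mul_nonneg (hPnn f) (Nat.cast_nonneg _)
  have step2 : ∑ f ∈ Finset.univ.image e, P f * (mptm true (resVec a f) : ℝ)
      = ∑ i : Fin n, P (e i) * ((i : ℝ) + 1) := by
    rw [Finset.sum_image (fun x _ y _ h => heinj h)]
    apply Finset.sum_congr rfl
    intro i _
    rw [hmptm i]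
    push_cast
    ring
  have step3 : ∑ i : Fin n, (c / n) * ((i : ℝ) + 1)
      ≤ ∑ i : Fin n, P (e i) * ((i : ℝ) + 1) := by
    apply Finset.sum_le_sum
    intro i _
    apply mul_le_mul_of_nonneg_right (hdom (e i) (hniah i))
    positivity
  have hsum : ∑ i : Fin n, ((i : ℝ) + 1) = (n : ℝ) * ((n : ℝ) + 1) / 2 := by
    have hnat := gauss_sum_succ n
    have h2 : (∑ i : Fin n, ((i : ℝ) + 1)) * 2 = (n : ℝ) * ((n : ℝ) + 1) := by
      calc (∑ i : Fin n, ((i : ℝ) + 1)) * 2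
          = ((∑ i ∈ Finset.range n, (i + 1) : ℕ) : ℝ) * 2 := by
            rw [Fin.sum_univ_eq_sum_range (fun k => (k : ℝ) + 1) n]; push_cast; ring
        _ = (n : ℝ) * ((n : ℝ) + 1) := by exact_mod_cast hnat
    linarith
  have step4 : ∑ i : Fin n, (c / n) * ((i : ℝ) + 1) = c * ((n : ℝ) + 1) / 2 := by
    rw [← Finset.mul_sum, hsum]
    have hn0 : (n : ℝ) ≠ 0 := by positivity
    field_simp
  linarith

end NFL
end
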